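/- A standard interference function m has at most one fixed point: if P = m(P) and P' = m(P') with P, P' ≥ 0, then P = P'. -/

import Mathlib

/-!
If `P` is not below the fixed point `P'`, let `α > 1` be the least factor with `P ≤ α P'`; it is
attained at some coordinate `i`. Monotonicity and scalability then give
`P = m P ≤ m (α P') < α m P' = α P'`, which is strict at `i` as well — a contradiction.
By symmetry `P = P'`.
-/

theorem exists_one_lt_scale_le_eq {ι : Type*} [Finite ι] (P Q : ι → ℝ) (hQ : ∀ i, 0 < Q i)
    (h : ∃ j, Q j < P j) :
    ∃ α : ℝ, 1 < α ∧ (∀ i, P i ≤ α * Q i) ∧ ∃ i, P i = α * Q i := by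
  obtain ⟨j, hj⟩ := h
  have : Nonempty ι := ⟨j⟩
  obtain ⟨i₀, hi₀⟩ := Finite.exists_max fun i => P i / Q i
  refine ⟨P i₀ / Q i₀, ?_, fun i => ?_, i₀, (div_mul_cancel₀ _ (hQ i₀).ne').symm⟩
  · exact ((one_lt_div (hQ j)).mpr hj).trans_le (hi₀ j)
  · exact (div_le_iff₀ (hQ i)).mp (hi₀ i)

theorem le_of_le_map_of_map_le {ι : Type*} [Finite ι] (m : (ι → ℝ) → (ι → ℝ))
    (hmono : ∀ P P' : ι → ℝ, (∀ i, 0 ≤ P i) → (∀ i, 0 ≤ P' i) →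
      (∀ i, P i ≤ P' i) → ∀ i, m P i ≤ m P' i)
    (hscal : ∀ P : ι → ℝ, (∀ i, 0 ≤ P i) → ∀ α : ℝ, 1 < α →
      ∀ i, m (fun j => α * P j) i < α * m P i)
    {P Q : ι → ℝ} (hP : ∀ i, 0 ≤ P i) (hQ : ∀ i, 0 < Q i)
    (hPm : ∀ i, P i ≤ m P i) (hQm : ∀ i, m Q i ≤ Q i) :
    ∀ i, P i ≤ Q i := by
  by_contra! h
  obtain ⟨α, hα, hle, i, hi⟩ := exists_one_lt_scale_le_eq P Q hQ h
  have hαQ : ∀ j, 0 ≤ α * Q j := fun j => by have := hQ j; positivity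
  have : P i < α * Q i :=
    calc P i ≤ m P i := hPm i
      _ ≤ m (fun j => α * Q j) i := hmono P _ hP hαQ hle i
      _ < α * m Q i := hscal Q (fun j => (hQ j).le) α hα i
      _ ≤ α * Q i := by gcongr; exact hQm i
  exact this.ne hi

theorem standard_interference_fixed_point_unique {K : ℕ}
    (m : (Fin K → ℝ) → (Fin K → ℝ))
    (hpos : ∀ P : Fin K → ℝ, (∀ i, 0 ≤ P i) → ∀ i, 0 < m P i)
    (hmono : ∀ P P' : Fin K → ℝ, (∀ i, 0 ≤ P i) → (∀ i, 0 ≤ P' i) →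
      (∀ i, P i ≤ P' i) → ∀ i, m P i ≤ m P' i)
    (hscal : ∀ P : Fin K → ℝ, (∀ i, 0 ≤ P i) → ∀ α : ℝ, 1 < α →
      ∀ i, m (fun j => α * P j) i < α * m P i)
    (P P' : Fin K → ℝ)
    (hP : ∀ i, 0 ≤ P i) (hP' : ∀ i, 0 ≤ P' i)
    (hfix : m P = P) (hfix' : m P' = P') :
    P = P' := by
  have hPpos : ∀ i, 0 < P i := hfix ▸ hpos P hP
  have hP'pos : ∀ i, 0 < P' i := hfix' ▸ hpos P' hP'
  funext i
  exact le_antisymm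
    (le_of_le_map_of_map_le m hmono hscal hP hP'pos (fun j => (congrFun hfix j).ge)
      (fun j => (congrFun hfix' j).le) i)
    (le_of_le_map_of_map_le m hmono hscal hP' hPpos (fun j => (congrFun hfix' j).ge)
      (fun j => (congrFun hfix j).le) i)
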